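/- arXiv:1507.05235 — 2 statements merged into one kernel-verified Lean document; each statement's English description precedes it below -/
import Mathlib

section
/- Let d ≥ 1, n ≥ 1, let k = (k_1,…,k_d) be a multi-index with k_i ≤ n for all i, and let f : ℝ^d → ℝ. Then the mixed partial derivative of the cube Bernstein polynomial satisfies ∂^{|k|}B̃_n(f;x)/∂x_1^{k_1}⋯∂x_d^{k_d} = ∏_{i=1}^{d}(n(n−1)⋯(n−k_i+1)) · ∑_{0 ≤ j_i ≤ n−k_i, i=1,…,d} Δ^k f(j_1/n,…,j_d/n) · ∏_{i=1}^{d} C(n−k_i, j_i) x_i^{j_i} (1−x_i)^{n−k_i−j_i}, where Δ^k = ∏_{i=1}^{d} Δ_{(x_i)}^{k_i} is the composition of iterated coordinate-wise forward differences with step 1/n. -/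
/-- The `n`-th "cube" Bernstein polynomial of `f : ℝ^d → ℝ`. -/
noncomputable def cubeBernstein (d n : ℕ) (f : (Fin d → ℝ) → ℝ) (x : Fin d → ℝ) : ℝ :=
  ∑ j ∈ Fintype.piFinset (fun _ : Fin d => Finset.range (n + 1)),
    f (fun i => (j i : ℝ) / n) *
      ∏ i, (n.choose (j i) : ℝ) * x i ^ (j i) * (1 - x i) ^ (n - j i)

/-- Partial derivative of `g : ℝ^d → ℝ` in the `i`-th coordinate. -/
noncomputable def partialDeriv' {d : ℕ} (i : Fin d) (g : (Fin d → ℝ) → ℝ) :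
    (Fin d → ℝ) → ℝ :=
  fun x => deriv (fun t => g (Function.update x i t)) (x i)

/-- Mixed partial derivative `∂^{|k|}/∂x_1^{k_1}⋯∂x_d^{k_d}` of `g : ℝ^d → ℝ`
(the derivative in `x_1` is applied outermost). -/
noncomputable def mixedPartial {d : ℕ} (k : Fin d → ℕ) (g : (Fin d → ℝ) → ℝ) :
    (Fin d → ℝ) → ℝ :=
  (List.finRange d).foldr (fun i h => (partialDeriv' i)^[k i] h) g

/-- Forward difference of `g : ℝ^d → ℝ` in the `i`-th coordinate with step `z`. -/
def coordFwdDiff {d : ℕ} (i : Fin d) (z : ℝ) (g : (Fin d → ℝ) → ℝ) :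
    (Fin d → ℝ) → ℝ :=
  fun x => g (Function.update x i (x i + z)) - g x

/-- The iterated finite difference `Δ^k = Δ_{(x_1)}^{k_1} ∘ ⋯ ∘ Δ_{(x_d)}^{k_d}` with
step `1/n` in each coordinate. -/
noncomputable def multiFwdDiffN {d : ℕ} (n : ℕ) (k : Fin d → ℕ) (g : (Fin d → ℝ) → ℝ) :
    (Fin d → ℝ) → ℝ :=
  (List.finRange d).foldr (fun i h => (coordFwdDiff i (1 / (n : ℝ)))^[k i] h) g

/-!
Summation by parts turns the derivative formula `b'_{m+1,a+1} = (m+1) (b_{m,a} - b_{m,a+1})` for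
Bernstein basis polynomials into
`d/dt ∑ₐ γ a * b_{m,a} t = m * ∑ₐ (γ (a+1) - γ a) * b_{m-1,a} t`. The cube Bernstein polynomial
is a tensor product of one-dimensional Bernstein bases, so `∂/∂xᵢ` only sees the `i`-th factor:
it multiplies by the `i`-th degree, lowers that degree by one and takes the forward difference
of the coefficients in the `i`-th index. Iterating produces the descending factorials, and since
the coefficients are the values of `f` on the grid `j/n`, unit steps in `j` are steps `1/n` of `f`.
-/

open Finset Function Polynomial

theorem bernsteinPolynomial_eval {R : Type*} [CommRing R] (m a : ℕ) (t : R) :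
    (bernsteinPolynomial R m a).eval t = m.choose a * t ^ a * (1 - t) ^ (m - a) := by
  simp [bernsteinPolynomial]

theorem bernsteinPolynomial.derivative_sum_C_mul {R : Type*} [CommRing R] (m : ℕ) (γ : ℕ → R) :
    derivative (∑ a ∈ range (m + 1), C (γ a) * bernsteinPolynomial R m a) =
      m * ∑ a ∈ range m, C (γ (a + 1) - γ a) * bernsteinPolynomial R (m - 1) a := by
  rcases m with _ | m
  · simp [bernsteinPolynomial]
  have hshift : ∑ a ∈ range (m + 1), C (γ a) * bernsteinPolynomial R m a =
      ∑ a ∈ range (m + 1), C (γ (a + 1)) * bernsteinPolynomial R m (a + 1) +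
        C (γ 0) * bernsteinPolynomial R m 0 := by
    rw [← sum_range_succ' (fun a => C (γ a) * bernsteinPolynomial R m a),
      sum_range_succ _ (m + 1), bernsteinPolynomial.eq_zero_of_lt R (Nat.lt_succ_self m),
      mul_zero, add_zero]
  rw [sum_range_succ', derivative_add, derivative_sum]
  simp only [derivative_C_mul, bernsteinPolynomial.derivative_succ_aux,
    bernsteinPolynomial.derivative_zero, Nat.add_sub_cancel, C_sub, sub_mul, sum_sub_distrib,
    hshift, mul_sub, mul_left_comm (C _), ← mul_sum]
  push_cast
  ring

theorem hasDerivAt_sum_mul_bernsteinPolynomial_eval (m : ℕ) (γ : ℕ → ℝ) (t : ℝ) :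
    HasDerivAt (fun s => ∑ a ∈ range (m + 1), γ a * (bernsteinPolynomial ℝ m a).eval s)
      (m * ∑ a ∈ range m, (γ (a + 1) - γ a) * (bernsteinPolynomial ℝ (m - 1) a).eval t) t := by
  have h := (∑ a ∈ range (m + 1), C (γ a) * bernsteinPolynomial ℝ m a).hasDerivAt t
  rw [bernsteinPolynomial.derivative_sum_C_mul] at h
  simpa [eval_finsetSum] using h

theorem Finset.sum_piFinset_eq_sum_sum_update {ι α M : Type*} [DecidableEq ι] [Fintype ι]
    [DecidableEq α] [AddCommMonoid M] (r : ι → Finset α) (i : ι) (a₀ : α) (g : (ι → α) → M) :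
    ∑ j ∈ Fintype.piFinset r, g j =
      ∑ p ∈ Fintype.piFinset (update r i {a₀}), ∑ a ∈ r i, g (update p i a) := by
  rw [← sum_product']
  refine sum_nbij' (fun j => (update j i a₀, j i)) (fun q => update q.1 i q.2) ?_ ?_ ?_ ?_ ?_
  · intro j hj
    simp only [mem_product, Fintype.mem_piFinset] at hj ⊢
    refine ⟨fun i' => ?_, hj i⟩
    rcases eq_or_ne i' i with rfl | h <;> simp [*]
  · intro q hq
    simp only [mem_product, Fintype.mem_piFinset] at hq ⊢
    intro i'
    rcases eq_or_ne i' i with rfl | h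
    · simpa using hq.2
    · simpa [h] using hq.1 i'
  · intro j _
    simp
  · rintro ⟨p, a⟩ hq
    simp only [mem_product, Fintype.mem_piFinset] at hq
    have hp : p i = a₀ := by simpa using hq.1 i
    simp [← hp]
  · intro j _
    simp

theorem Function.update_add_single {ι M : Type*} [DecidableEq ι] [AddZeroClass M] (x : ι → M)
    (i : ι) (a b : M) : update x i a + Pi.single i b = update x i (a + b) := by
  ext i'
  rcases eq_or_ne i' i with rfl | h <;> simp [*]

open scoped fwdDiff

section TensorBernstein

variable {d : ℕ}

noncomputable def tensorBernstein (m : Fin d → ℕ) (c : (Fin d → ℕ) → ℝ) (x : Fin d → ℝ) : ℝ :=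
  ∑ j ∈ Fintype.piFinset (fun i => range (m i + 1)),
    c j * ∏ i, (bernsteinPolynomial ℝ (m i) (j i)).eval (x i)

theorem tensorBernstein_apply (m : Fin d → ℕ) (c : (Fin d → ℕ) → ℝ) (x : Fin d → ℝ) :
    tensorBernstein m c x = ∑ j ∈ Fintype.piFinset (fun i => range (m i + 1)),
      c j * ∏ i, ((m i).choose (j i) : ℝ) * x i ^ j i * (1 - x i) ^ (m i - j i) := by
  simp only [tensorBernstein, bernsteinPolynomial_eval]

theorem tensorBernstein_update_update (m : Fin d → ℕ) (i : Fin d) (μ : ℕ)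
    (c : (Fin d → ℕ) → ℝ) (x : Fin d → ℝ) (t : ℝ) :
    tensorBernstein (update m i μ) c (update x i t) =
      ∑ p ∈ Fintype.piFinset (update (fun i => range (m i + 1)) i {0}),
        (∏ i' ∈ {i}ᶜ, (bernsteinPolynomial ℝ (m i') (p i')).eval (x i')) *
          ∑ a ∈ range (μ + 1), c (update p i a) * (bernsteinPolynomial ℝ μ a).eval t := by
  have hbox : update (fun i' => range (update m i μ i' + 1)) i {0} =
      update (fun i' => range (m i' + 1)) i {0} := by
    ext1 i'
    rcases eq_or_ne i' i with rfl | h <;> simp [*]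
  rw [tensorBernstein, sum_piFinset_eq_sum_sum_update _ i 0, hbox]
  refine sum_congr rfl fun p _ => ?_
  rw [mul_sum, update_self]
  refine sum_congr rfl fun a _ => ?_
  rw [Fintype.prod_eq_mul_prod_compl i]
  simp only [update_self]
  have hoff (i' : Fin d) (hi' : i' ∈ ({i}ᶜ : Finset (Fin d))) : i' ≠ i := by simpa using hi'
  simp +contextual only [update_of_ne, hoff, ne_eq, not_false_eq_true]
  ring

theorem partialDeriv'_tensorBernstein (i : Fin d) (m : Fin d → ℕ) (c : (Fin d → ℕ) → ℝ) :
    partialDeriv' i (tensorBernstein m c) =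
      (m i : ℝ) • tensorBernstein (update m i (m i - 1)) (Δ_[Pi.single i 1] c) := by
  ext x
  set P := Fintype.piFinset (update (fun i => range (m i + 1)) i {0})
  set R : (Fin d → ℕ) → ℝ := fun p =>
    ∏ i' ∈ {i}ᶜ, (bernsteinPolynomial ℝ (m i') (p i')).eval (x i')
  have hslice : (fun t => tensorBernstein m c (update x i t)) = fun t => ∑ p ∈ P, R p *
      ∑ a ∈ range (m i + 1), c (update p i a) * (bernsteinPolynomial ℝ (m i) a).eval t := by
    ext t
    rw [← tensorBernstein_update_update, update_eq_self]
  have hderiv := HasDerivAt.fun_sum (u := P) fun p _ =>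
    (hasDerivAt_sum_mul_bernsteinPolynomial_eval (m i) (c <| update p i ·) (x i)).const_mul (R p)
  rw [partialDeriv', hslice, hderiv.deriv, Pi.smul_apply, smul_eq_mul]
  conv_rhs => rw [← update_eq_self i x, tensorBernstein_update_update, mul_sum]
  refine sum_congr rfl fun p _ => ?_
  rcases Nat.eq_zero_or_pos (m i) with h | h
  · simp [h]
  simp only [Nat.sub_add_cancel h, fwdDiff, update_add_single]
  ring

theorem partialDeriv'_smul (i : Fin d) (r : ℝ) (g : (Fin d → ℝ) → ℝ) :
    partialDeriv' i (r • g) = r • partialDeriv' i g :=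
  funext fun _ => deriv_const_mul_field r

theorem iterate_partialDeriv'_smul (i : Fin d) (K : ℕ) (r : ℝ) (g : (Fin d → ℝ) → ℝ) :
    (partialDeriv' i)^[K] (r • g) = r • (partialDeriv' i)^[K] g :=
  (show Function.Commute (partialDeriv' i) (r • ·) from partialDeriv'_smul i r).iterate_left K g

theorem iterate_partialDeriv'_tensorBernstein (i : Fin d) (K : ℕ) (m : Fin d → ℕ)
    (c : (Fin d → ℕ) → ℝ) :
    (partialDeriv' i)^[K] (tensorBernstein m c) = ((m i).descFactorial K : ℝ) •
      tensorBernstein (update m i (m i - K)) ((Δ_[Pi.single i 1])^[K] c) := by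
  induction K with
  | zero => simp
  | succ K ih =>
    rw [iterate_succ_apply', ih, partialDeriv'_smul, partialDeriv'_tensorBernstein, smul_smul,
      update_self, update_idem, iterate_succ_apply', Nat.descFactorial_succ, Nat.sub_sub, mul_comm]
    push_cast
    rfl

theorem foldr_iterate_partialDeriv'_tensorBernstein (k : Fin d → ℕ) {L : List (Fin d)}
    (hL : L.Nodup) (m : Fin d → ℕ) (c : (Fin d → ℕ) → ℝ) :
    L.foldr (fun i h => (partialDeriv' i)^[k i] h) (tensorBernstein m c) =
      (L.map fun i => ((m i).descFactorial (k i) : ℝ)).prod •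
        tensorBernstein (fun i => if i ∈ L then m i - k i else m i)
          (L.foldr (fun i h => (Δ_[Pi.single i 1])^[k i] h) c) := by
  induction L with
  | nil => simp
  | cons i L ih =>
    obtain ⟨hi, hL⟩ := List.nodup_cons.mp hL
    have hm : update (fun i' => if i' ∈ L then m i' - k i' else m i') i (m i - k i) =
        fun i' => if i' ∈ i :: L then m i' - k i' else m i' := by
      ext1 i'
      rcases eq_or_ne i' i with rfl | h <;> simp [*]
    rw [List.foldr_cons, ih hL, iterate_partialDeriv'_smul, iterate_partialDeriv'_tensorBernstein,
      smul_smul]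
    simp only [if_neg hi, hm, List.map_cons, List.prod_cons, List.foldr_cons, mul_comm]

end TensorBernstein

section Grid

variable {d : ℕ}

noncomputable def gridValues (n : ℕ) (g : (Fin d → ℝ) → ℝ) : (Fin d → ℕ) → ℝ :=
  fun j => g fun i => (j i : ℝ) / n

theorem gridValues_coordFwdDiff (n : ℕ) (i : Fin d) (g : (Fin d → ℝ) → ℝ) :
    gridValues n (coordFwdDiff i (1 / (n : ℝ)) g) = Δ_[Pi.single i 1] (gridValues n g) := by
  ext j
  have hstep : update (fun i' => (j i' : ℝ) / n) i ((j i : ℝ) / n + 1 / n) =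
      fun i' => ((j + Pi.single i 1 : Fin d → ℕ) i' : ℝ) / n := by
    ext i'
    rcases eq_or_ne i' i with rfl | h <;> simp [*, add_div]
  simp only [gridValues, coordFwdDiff, fwdDiff, hstep]

theorem gridValues_multiFwdDiffN (n : ℕ) (k : Fin d → ℕ) (g : (Fin d → ℝ) → ℝ) :
    gridValues n (multiFwdDiffN n k g) =
      (List.finRange d).foldr (fun i h => (Δ_[Pi.single i 1])^[k i] h) (gridValues n g) :=
  (List.foldr_hom (gridValues n) fun i h =>
    ((show Function.Semiconj (gridValues n) _ _ from gridValues_coordFwdDiff n i).iterate_right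
      (k i) h).symm).symm

theorem cubeBernstein_eq_tensorBernstein (d n : ℕ) (f : (Fin d → ℝ) → ℝ) :
    cubeBernstein d n f = tensorBernstein (fun _ => n) (gridValues n f) := by
  ext x
  rw [tensorBernstein_apply]
  rfl

end Grid

theorem cubeBernstein_mixedPartial_eq_general (d n : ℕ)
    (k : Fin d → ℕ) (f : (Fin d → ℝ) → ℝ) (x : Fin d → ℝ) :
    mixedPartial k (cubeBernstein d n f) x =
      (∏ i, (n.descFactorial (k i) : ℝ)) *
        ∑ j ∈ Fintype.piFinset (fun i : Fin d => Finset.range (n - k i + 1)),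
          multiFwdDiffN n k f (fun i => (j i : ℝ) / n) *
            ∏ i, ((n - k i).choose (j i) : ℝ) * x i ^ (j i) *
              (1 - x i) ^ (n - k i - j i) := by
  rw [mixedPartial, cubeBernstein_eq_tensorBernstein,
    foldr_iterate_partialDeriv'_tensorBernstein k (List.nodup_finRange d),
    ← gridValues_multiFwdDiffN, ← Fin.prod_univ_def, Pi.smul_apply, smul_eq_mul,
    tensorBernstein_apply]
  simp only [List.mem_finRange, if_true]
  rfl

/-- For `d ≥ 1`, `n ≥ 1`, a multi-index `k` with `k_i ≤ n` for all `i`, and any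
`f : ℝ^d → ℝ`,
`∂^{|k|}B̃_n(f;x)/∂x^k = ∏_i n(n-1)⋯(n-k_i+1) ·
  ∑_{0 ≤ j_i ≤ n-k_i} Δ^k f(j/n) ∏_i C(n-k_i,j_i) x_i^{j_i} (1-x_i)^{n-k_i-j_i}`. -/
theorem cubeBernstein_mixedPartial_eq (d n : ℕ) (hd : 1 ≤ d) (hn : 1 ≤ n)
    (k : Fin d → ℕ) (hk : ∀ i, k i ≤ n) (f : (Fin d → ℝ) → ℝ) (x : Fin d → ℝ) :
    mixedPartial k (cubeBernstein d n f) x =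
      (∏ i, (n.descFactorial (k i) : ℝ)) *
        ∑ j ∈ Fintype.piFinset (fun i : Fin d => Finset.range (n - k i + 1)),
          multiFwdDiffN n k f (fun i => (j i : ℝ) / n) *
            ∏ i, ((n - k i).choose (j i) : ℝ) * x i ^ (j i) *
              (1 - x i) ^ (n - k i - j i) :=
  cubeBernstein_mixedPartial_eq_general d n k f x
end

section
/- Let d ≥ 1, let k = (k_1,…,k_d) be a multi-index, and let f : ℝ^d → ℝ possess a continuous mixed partial derivative ∂^{|k|}f/∂x_1^{k_1}⋯∂x_d^{k_d}. Then (n!/(n−|k|)!) · Δ^k f(x) converges to ∂^{|k|}f(x)/∂x_1^{k_1}⋯∂x_d^{k_d} as n → ∞, uniformly for x in the simplex S^d = {x ∈ ℝ^d : x_1,…,x_d ≥ 0 and x_1+⋯+x_d ≤ 1}, where Δ^k is the composition of the k_i-fold iterated forward differences with step 1/n in each coordinate. -/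
/-- `IsPartialAlong l f g` says that `g` is the iterated partial derivative of `f` taken
successively in the coordinates listed in `l` (head of the list is the outermost
differentiation), each single differentiation existing everywhere. -/
def IsPartialAlong {d : ℕ} : List (Fin d) → ((Fin d → ℝ) → ℝ) → ((Fin d → ℝ) → ℝ) → Prop
  | [], f, g => g = f
  | i :: l, f, g => ∃ h : (Fin d → ℝ) → ℝ, IsPartialAlong l f h ∧
      ∀ x, HasDerivAt (fun t => h (Function.update x i t)) (g x) (x i)

/-- The list of coordinates `1^{k_1}, 2^{k_2}, …, d^{k_d}` encoding the multi-index `k`. -/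
def multiIndexList {d : ℕ} (k : Fin d → ℕ) : List (Fin d) :=
  (List.finRange d).flatMap fun i => List.replicate (k i) i

/-- The standard simplex `S^d = {x : x_i ≥ 0, x_1+⋯+x_d ≤ 1}`. -/
def stdSimplex' (d : ℕ) : Set (Fin d → ℝ) := {x | (∀ i, 0 ≤ x i) ∧ ∑ i, x i ≤ 1}

/-!
By the mean value theorem on a coordinate line, one forward difference of step `z` is `z` times
the partial derivative at an intermediate point. Forward differences in different coordinates
commute, and commute with partial differentiation, so peeling them off one at a time gives
`Δ^k f(x) = n^{-|k|} g(y)` with `dist y x ≤ |k|/n`. Since `n!/(n-|k|)! ~ n^{|k|}`, the rescaled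
differences are `(1 + o(1)) g(y)`, and `g` is uniformly continuous near the compact simplex.
-/

open Function Filter Topology

section ListFwdDiff

variable {d : ℕ}

def listFwdDiff (z : ℝ) : List (Fin d) → ((Fin d → ℝ) → ℝ) → (Fin d → ℝ) → ℝ
  | [], g => g
  | i :: l, g => coordFwdDiff i z (listFwdDiff z l g)

lemma coordFwdDiff_comm (i j : Fin d) (z : ℝ) (g : (Fin d → ℝ) → ℝ) :
    coordFwdDiff i z (coordFwdDiff j z g) = coordFwdDiff j z (coordFwdDiff i z g) := by
  rcases eq_or_ne i j with rfl | hij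
  · rfl
  · funext x
    simp only [coordFwdDiff, update_of_ne hij, update_of_ne hij.symm, update_comm hij]
    ring

lemma listFwdDiff_coordFwdDiff (z : ℝ) (i : Fin d) (l : List (Fin d)) (g : (Fin d → ℝ) → ℝ) :
    listFwdDiff z l (coordFwdDiff i z g) = coordFwdDiff i z (listFwdDiff z l g) := by
  induction l with
  | nil => rfl
  | cons j l ih => rw [listFwdDiff, ih, coordFwdDiff_comm]; rfl

lemma listFwdDiff_append (z : ℝ) (l₁ l₂ : List (Fin d)) (g : (Fin d → ℝ) → ℝ) :
    listFwdDiff z (l₁ ++ l₂) g = listFwdDiff z l₁ (listFwdDiff z l₂ g) := by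
  induction l₁ with
  | nil => rfl
  | cons i l ih => rw [List.cons_append, listFwdDiff, ih]; rfl

lemma listFwdDiff_replicate (z : ℝ) (m : ℕ) (i : Fin d) (g : (Fin d → ℝ) → ℝ) :
    listFwdDiff z (List.replicate m i) g = (coordFwdDiff i z)^[m] g := by
  induction m with
  | zero => rfl
  | succ m ih => rw [List.replicate_succ, listFwdDiff, ih, iterate_succ_apply']

lemma multiFwdDiffN_eq_listFwdDiff (n : ℕ) (k : Fin d → ℕ) (f : (Fin d → ℝ) → ℝ) :
    multiFwdDiffN n k f = listFwdDiff (1 / (n : ℝ)) (multiIndexList k) f := by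
  unfold multiFwdDiffN multiIndexList
  induction List.finRange d with
  | nil => rfl
  | cons i L ih =>
    rw [List.foldr_cons, ih, List.flatMap_cons, listFwdDiff_append, listFwdDiff_replicate]

lemma length_multiIndexList (k : Fin d → ℕ) : (multiIndexList k).length = ∑ i, k i := by
  simp [multiIndexList, List.length_flatMap, Fin.sum_univ_def]

end ListFwdDiff

namespace IsPartialAlong

variable {d : ℕ} {l : List (Fin d)}

lemma comp_update_add {f g : (Fin d → ℝ) → ℝ} (hl : IsPartialAlong l f g) (i : Fin d)
    (z : ℝ) :
    IsPartialAlong l (fun x => f (update x i (x i + z))) (fun x => g (update x i (x i + z))) := by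
  induction l generalizing f g with
  | nil => rw [hl]; rfl
  | cons j l ih =>
    obtain ⟨h, hh, hderiv⟩ := hl
    refine ⟨fun x => h (update x i (x i + z)), ih hh, fun x => ?_⟩
    rcases eq_or_ne j i with rfl | hji
    · have hshift := hderiv (update x j (x j + z))
      simp only [update_idem, update_self] at hshift
      simpa [update_idem] using hshift.comp_add_const (x j) z
    · have hswap : ∀ t : ℝ, update (update x j t) i (update x j t i + z)
          = update (update x i (x i + z)) j t := fun t => by
        rw [update_of_ne hji.symm, update_comm hji]
      simpa only [hswap, update_of_ne hji] using hderiv (update x i (x i + z))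

lemma sub {f₁ g₁ f₂ g₂ : (Fin d → ℝ) → ℝ} (h₁ : IsPartialAlong l f₁ g₁)
    (h₂ : IsPartialAlong l f₂ g₂) :
    IsPartialAlong l (fun x => f₁ x - f₂ x) (fun x => g₁ x - g₂ x) := by
  induction l generalizing f₁ g₁ f₂ g₂ with
  | nil => rw [show g₁ = f₁ from h₁, show g₂ = f₂ from h₂]; rfl
  | cons j l ih =>
    obtain ⟨h₁', hh₁, hd₁⟩ := h₁
    obtain ⟨h₂', hh₂, hd₂⟩ := h₂
    exact ⟨fun x => h₁' x - h₂' x, ih hh₁ hh₂, fun x => (hd₁ x).sub (hd₂ x)⟩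

lemma coordFwdDiff {f g : (Fin d → ℝ) → ℝ} (hl : IsPartialAlong l f g) (i : Fin d) (z : ℝ) :
    IsPartialAlong l (coordFwdDiff i z f) (coordFwdDiff i z g) :=
  (hl.comp_update_add i z).sub hl

end IsPartialAlong

lemma exists_coordFwdDiff_eq_mul {d : ℕ} {h g : (Fin d → ℝ) → ℝ} {i : Fin d} {z : ℝ}
    (hz : 0 ≤ z) (hderiv : ∀ x, HasDerivAt (fun t => h (update x i t)) (g x) (x i))
    (x : Fin d → ℝ) :
    ∃ c ∈ Set.Icc (x i) (x i + z), coordFwdDiff i z h x = z * g (update x i c) := by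
  rcases hz.eq_or_lt with rfl | hz
  · exact ⟨x i, by simp, by simp [coordFwdDiff]⟩
  have hline : ∀ t, HasDerivAt (fun s => h (update x i s)) (g (update x i t)) t := fun t => by
    simpa [update_idem] using hderiv (update x i t)
  obtain ⟨c, hc, hslope⟩ := exists_hasDerivAt_eq_slope (fun s => h (update x i s))
    (fun s => g (update x i s)) (lt_add_of_pos_right (x i) hz)
    (fun s _ => (hline s).continuousAt.continuousWithinAt) (fun s _ => hline s)
  refine ⟨c, Set.Ioo_subset_Icc_self hc, ?_⟩
  rw [hslope, add_sub_cancel_left, mul_div_cancel₀ _ hz.ne', update_eq_self, coordFwdDiff]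

lemma IsPartialAlong.exists_listFwdDiff_eq_pow_mul {d : ℕ} {l : List (Fin d)}
    {f g : (Fin d → ℝ) → ℝ} (hl : IsPartialAlong l f g) {z : ℝ} (hz : 0 ≤ z)
    (x : Fin d → ℝ) :
    ∃ y, dist y x ≤ l.length * z ∧ listFwdDiff z l f x = z ^ l.length * g y := by
  induction l generalizing f g with
  | nil => exact ⟨x, by simp, by rw [hl]; simp [listFwdDiff]⟩
  | cons i l ih =>
    obtain ⟨h, hh, hderiv⟩ := hl
    obtain ⟨y, hyx, hy⟩ := ih (hh.coordFwdDiff i z)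
    obtain ⟨c, hc, hcy⟩ := exists_coordFwdDiff_eq_mul hz hderiv y
    have hstep : dist (update y i c) y ≤ z := (dist_pi_le_iff hz).2 fun j => by
      rcases eq_or_ne j i with rfl | hji
      · rw [update_self, Real.dist_eq, abs_le]
        constructor <;> linarith [hc.1, hc.2]
      · simpa [update_of_ne hji] using hz
    refine ⟨update y i c, ?_, ?_⟩
    · calc dist (update y i c) x ≤ dist (update y i c) y + dist y x := dist_triangle _ _ _
        _ ≤ ((i :: l).length : ℝ) * z := by push_cast [List.length_cons]; linarith
    · rw [listFwdDiff, ← listFwdDiff_coordFwdDiff, hy, hcy, List.length_cons]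
      ring

lemma IsPartialAlong.exists_multiFwdDiffN_eq_pow_mul {d : ℕ} {k : Fin d → ℕ}
    {f g : (Fin d → ℝ) → ℝ} (hg : IsPartialAlong (multiIndexList k) f g) (n : ℕ)
    (x : Fin d → ℝ) :
    ∃ y, dist y x ≤ (∑ i, k i : ℕ) / (n : ℝ) ∧
      multiFwdDiffN n k f x = (1 / (n : ℝ)) ^ (∑ i, k i) * g y := by
  rw [multiFwdDiffN_eq_listFwdDiff, ← length_multiIndexList, div_eq_mul_one_div]
  exact hg.exists_listFwdDiff_eq_pow_mul (by positivity) x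

lemma tendsto_factorial_div_factorial_sub_mul_pow (m : ℕ) :
    Tendsto (fun n : ℕ => (n.factorial : ℝ) / ((n - m).factorial : ℝ) * (1 / (n : ℝ)) ^ m)
      atTop (𝓝 1) := by
  have hpos : ∀ᶠ n : ℕ in atTop, ((n : ℝ) ^ m) ≠ 0 :=
    eventually_atTop.2 ⟨1, fun n hn => pow_ne_zero _ (by positivity)⟩
  refine ((Asymptotics.isEquivalent_iff_tendsto_one hpos).1
    (isEquivalent_descFactorial m)).congr' ?_
  filter_upwards [eventually_ge_atTop m] with n hnm
  rw [Pi.div_apply, ← Nat.factorial_mul_descFactorial hnm, Nat.cast_mul,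
    mul_div_cancel_left₀ _ (by positivity), one_div, inv_pow, div_eq_mul_inv]

lemma tendstoUniformly_of_dist_le {ι α β : Type*} [PseudoMetricSpace β] {F : ι → α → β}
    {f : α → β} {p : Filter ι} {r : ι → ℝ} (hF : ∀ i x, dist (f x) (F i x) ≤ r i)
    (hr : Tendsto r p (𝓝 0)) : TendstoUniformly F f p :=
  Metric.tendstoUniformly_iff.2 fun _ hε =>
    (hr.eventually (gt_mem_nhds hε)).mono fun i hi x => (hF i x).trans_lt hi

lemma TendstoUniformlyOn.comp_of_isCompact {ι α β γ : Type*} [UniformSpace α] [UniformSpace β]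
    {F : ι → γ → α} {f : γ → α} {p : Filter ι} {s : Set γ} {K : Set α} {g : α → β}
    (h : TendstoUniformlyOn F f p s) (hK : IsCompact K) (hfK : Set.MapsTo f s K)
    (hg : ∀ a ∈ K, ContinuousAt g a) :
    TendstoUniformlyOn (fun i x => g (F i x)) (fun x => g (f x)) p s := fun _ hu =>
  (h _ (hK.uniformContinuousAt_of_continuousAt g hg hu)).mono fun _ hi x hx => hi x hx (hfK hx)

theorem IsPartialAlong.tendstoUniformlyOn_factorial_div_mul_multiFwdDiffN {d : ℕ}
    {k : Fin d → ℕ} {f g : (Fin d → ℝ) → ℝ} (hg : IsPartialAlong (multiIndexList k) f g)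
    (hgc : Continuous g) {S : Set (Fin d → ℝ)} (hS : IsCompact S) :
    TendstoUniformlyOn
      (fun (n : ℕ) x =>
        (n.factorial : ℝ) / ((n - ∑ i, k i).factorial : ℝ) * multiFwdDiffN n k f x)
      g atTop S := by
  choose y hyx hy using hg.exists_multiFwdDiffN_eq_pow_mul
  have hy_unif : TendstoUniformly y id atTop :=
    tendstoUniformly_of_dist_le (fun n x => (dist_comm _ _).trans_le (hyx n x))
      (tendsto_const_div_atTop_nhds_zero_nat _)
  have hgy : TendstoUniformlyOn (fun n x => g (y n x)) g atTop S :=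
    hy_unif.tendstoUniformlyOn.comp_of_isCompact hS (Set.mapsTo_id S)
      fun _ _ => hgc.continuousAt
  have hc := (tendsto_factorial_div_factorial_sub_mul_pow (∑ i, k i)).tendstoUniformlyOn_const S
  have hprod := hc.tendstoLocallyUniformlyOn.fun_mul₀ hgy.tendstoLocallyUniformlyOn
    continuousOn_const hgc.continuousOn
  rw [tendstoLocallyUniformlyOn_iff_tendstoUniformlyOn_of_compact hS] at hprod
  simpa [hy, mul_assoc] using hprod

lemma isCompact_stdSimplex' (d : ℕ) : IsCompact (stdSimplex' d) := by
  refine (isCompact_univ_pi fun _ => isCompact_Icc (a := (0 : ℝ)) (b := 1)).of_isClosed_subset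
    ?_ fun x hx i _ => ⟨hx.1 i, ?_⟩
  · rw [stdSimplex', Set.ofPred_and, Set.ofPred_forall]
    exact (isClosed_iInter fun i => isClosed_le continuous_const (continuous_apply i)).inter
      (isClosed_le (continuous_finsetSum _ fun i _ => continuous_apply i) continuous_const)
  · exact (Finset.single_le_sum (fun j _ => hx.1 j) (Finset.mem_univ i)).trans hx.2

theorem multiFwdDiffN_tendstoUniformlyOn_simplex_general (d : ℕ) (k : Fin d → ℕ)
    (f g : (Fin d → ℝ) → ℝ) (hg : IsPartialAlong (multiIndexList k) f g)
    (hgc : Continuous g) :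
    TendstoUniformlyOn
      (fun (n : ℕ) x =>
        (n.factorial : ℝ) / ((n - ∑ i, k i).factorial : ℝ) * multiFwdDiffN n k f x)
      g Filter.atTop (stdSimplex' d) :=
  hg.tendstoUniformlyOn_factorial_div_mul_multiFwdDiffN hgc (isCompact_stdSimplex' d)

/-- If `d ≥ 1`, `k` is a multi-index and `f : ℝ^d → ℝ` possesses a continuous mixed
partial derivative `g = ∂^{|k|}f/∂x_1^{k_1}⋯∂x_d^{k_d}`, then
`(n!/(n-|k|)!) Δ^k f(x) → g(x)` as `n → ∞`, uniformly on the simplex `S^d`. -/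
theorem multiFwdDiffN_tendstoUniformlyOn_simplex (d : ℕ) (hd : 1 ≤ d) (k : Fin d → ℕ)
    (f g : (Fin d → ℝ) → ℝ) (hg : IsPartialAlong (multiIndexList k) f g)
    (hgc : Continuous g) :
    TendstoUniformlyOn
      (fun (n : ℕ) x =>
        (n.factorial : ℝ) / ((n - ∑ i, k i).factorial : ℝ) * multiFwdDiffN n k f x)
      g Filter.atTop (stdSimplex' d) :=
  multiFwdDiffN_tendstoUniformlyOn_simplex_general d k f g hg hgc
end
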